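/- Let S_G = (Pos, Neg, Ex, Un) be a game sample over a domain D and let H ⊆ D be consistent with S_G. Then the complement D \ H is consistent with the Horn sample S_H obtained by the translation: each positive example d yields the Horn constraint d → false; each negative example d yields true → d; each existential counterexample d → (d1 ∨ ... ∨ dn) yields (d1 ∧ ... ∧ dn) → d; each universal counterexample d → (d1 ∧ ... ∧ dn) yields the constraints d1 → d, ..., dn → d. Conversely, if D \ H is consistent with S_H then H is consistent with S_G. -/

import Mathlib

/-- Consistency of a set `H` with a game sample `(Pos, Neg, Ex, Un)`. -/
def GameConsistent {D : Type*} (H : Set D) (Pos Neg : List D)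
    (Ex Un : List (D × List D)) : Prop :=
  (∀ d ∈ Pos, d ∈ H) ∧ (∀ d ∈ Neg, d ∉ H) ∧
  (∀ p ∈ Ex, p.1 ∈ H → ∃ d ∈ p.2, d ∈ H) ∧
  (∀ p ∈ Un, p.1 ∈ H → ∀ d ∈ p.2, d ∈ H)

/-- A Horn constraint is a pair of a body (conjunction of data points) and a
head, which is either a data point (`some d`) or `false` (`none`). -/
def HornConsistent {D : Type*} (A : Set D) (S : List (List D × Option D)) : Prop :=
  ∀ c ∈ S, (∀ d ∈ c.1, d ∈ A) →
    match c.2 with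
    | some d => d ∈ A
    | none => False

/-- The translation of a game sample into a Horn sample (Step 1 of Algorithm 1). -/
def toHornSample {D : Type*} (Pos Neg : List D) (Ex Un : List (D × List D)) :
    List (List D × Option D) :=
  (Pos.map fun d => ([d], none)) ++
  (Neg.map fun d => ([], some d)) ++
  (Ex.map fun p => (p.2, some p.1)) ++
  (Un.flatMap fun p => p.2.map fun di => ([di], some p.1))

/- Complementation turns each game constraint into its contrapositive: `d ∈ H` becomes `d ∉ Hᶜ`,
an existential constraint `d → ∨ dᵢ` becomes the Horn clause `∧ dᵢ → d` over `Hᶜ`, and a universal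
constraint `d → ∧ dᵢ` splits into the clauses `dᵢ → d`. -/

theorem hornConsistent_append {D : Type*} (A : Set D) (S T : List (List D × Option D)) :
    HornConsistent A (S ++ T) ↔ HornConsistent A S ∧ HornConsistent A T :=
  List.forall_mem_append

section Complement

variable {D : Type*} (H : Set D)

theorem hornConsistent_compl_pos_iff (Pos : List D) :
    HornConsistent Hᶜ (Pos.map fun d => ([d], none)) ↔ ∀ d ∈ Pos, d ∈ H := by
  simp [HornConsistent]

theorem hornConsistent_compl_neg_iff (Neg : List D) :
    HornConsistent Hᶜ (Neg.map fun d => ([], some d)) ↔ ∀ d ∈ Neg, d ∉ H := by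
  simp [HornConsistent]

theorem hornConsistent_compl_ex_iff (Ex : List (D × List D)) :
    HornConsistent Hᶜ (Ex.map fun p => (p.2, some p.1)) ↔
      ∀ p ∈ Ex, p.1 ∈ H → ∃ d ∈ p.2, d ∈ H := by
  simp only [HornConsistent, List.forall_mem_map, Set.mem_compl_iff]
  refine forall₂_congr fun p _ => ?_
  simp only [imp_not_comm, not_forall, not_not, exists_prop]

theorem hornConsistent_compl_un_iff (Un : List (D × List D)) :
    HornConsistent Hᶜ (Un.flatMap fun p => p.2.map fun di => ([di], some p.1)) ↔
      ∀ p ∈ Un, p.1 ∈ H → ∀ d ∈ p.2, d ∈ H := by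
  simp only [HornConsistent, List.forall_mem_flatMap, List.forall_mem_map, List.mem_singleton,
    forall_eq, Set.mem_compl_iff, not_imp_not]
  exact forall₂_congr fun _ _ => ⟨fun h hp d hd => h d hd hp, fun h d hd hp => h hp d hd⟩

end Complement

theorem stmt_6 {D : Type*} (H : Set D) (Pos Neg : List D)
    (Ex Un : List (D × List D)) :
    GameConsistent H Pos Neg Ex Un ↔
      HornConsistent Hᶜ (toHornSample Pos Neg Ex Un) := by
  simp only [GameConsistent, toHornSample, hornConsistent_append, hornConsistent_compl_pos_iff,
    hornConsistent_compl_neg_iff, hornConsistent_compl_ex_iff, hornConsistent_compl_un_iff,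
    and_assoc]
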